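/- Let G be a finite simple graph with Edmonds–Gallai decomposition V(G) = A ⊔ C ⊔ D (D the set of vertices missed by some maximum matching, A = N(D) − D, C the rest). If S is a critical independent set of G, then S is contained in C together with the union of the singleton components of G[D]. -/
import Mathlib


open Classical Finset

/-- Neighborhood of a set of vertices: all vertices adjacent to some vertex of `X`. -/
noncomputable def nbhd {V : Type*} (G : SimpleGraph V) [Fintype V] (X : Finset V) : Finset V :=
  Finset.univ.filter (fun v => ∃ x ∈ X, G.Adj x v)

/-- The difference `d(X) = |X| - |N(X)|`. -/
noncomputable def gdiff {V : Type*} (G : SimpleGraph V) [Fintype V] (X : Finset V) : ℤ :=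
  (X.card : ℤ) - ((nbhd G X).card : ℤ)

/-- `X` is an independent set of `G`. -/
def IsIndep {V : Type*} (G : SimpleGraph V) (X : Finset V) : Prop :=
  ∀ x ∈ X, ∀ y ∈ X, ¬ G.Adj x y

/-- The critical difference `d_c(G) = max { d(X) : X ⊆ V(G) }`. -/
noncomputable def critDiff {V : Type*} (G : SimpleGraph V) [Fintype V] : ℤ :=
  Finset.univ.powerset.sup' ⟨∅, Finset.empty_mem_powerset _⟩ (gdiff G)

/-- `X` is a critical set of `G`. -/
noncomputable def IsCritical {V : Type*} (G : SimpleGraph V) [Fintype V] (X : Finset V) : Prop :=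
  gdiff G X = critDiff G

/-- `ker G` : the intersection of all critical sets of `G`. -/
noncomputable def kerG {V : Type*} (G : SimpleGraph V) [Fintype V] : Finset V :=
  Finset.univ.filter (fun v => ∀ X : Finset V, IsCritical G X → v ∈ X)

/-- `diadem G` : the union of all critical independent sets of `G`. -/
noncomputable def diademG {V : Type*} (G : SimpleGraph V) [Fintype V] : Finset V :=
  Finset.univ.filter (fun v => ∃ X : Finset V, IsCritical G X ∧ IsIndep G X ∧ v ∈ X)

/-- The independence number `α(G)`. -/
noncomputable def alphaG {V : Type*} (G : SimpleGraph V) [Fintype V] : ℕ :=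
  (Finset.univ.powerset.filter (IsIndep G)).sup Finset.card

/-- `core G` : the intersection of all maximum independent sets of `G`. -/
noncomputable def coreG {V : Type*} (G : SimpleGraph V) [Fintype V] : Finset V :=
  Finset.univ.filter (fun v => ∀ I : Finset V, IsIndep G I → I.card = alphaG G → v ∈ I)

/-- `M` is a matching of `G`, given as a finite set of pairwise disjoint edges of `G`. -/
def IsMatchingF {V : Type*} (G : SimpleGraph V) (M : Finset (Sym2 V)) : Prop :=
  (↑M : Set (Sym2 V)) ⊆ G.edgeSet ∧
    ∀ e₁ ∈ M, ∀ e₂ ∈ M, e₁ ≠ e₂ → ∀ v : V, v ∈ e₁ → v ∉ e₂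

/-- The matching number `μ(G)`. -/
noncomputable def matchNum {V : Type*} (G : SimpleGraph V) [Fintype V] : ℕ :=
  ((Finset.univ : Finset (Finset (Sym2 V))).filter (IsMatchingF G)).sup Finset.card

/-- There is a matching from `A` into `B`: an injection of `A` into `B` along edges of `G`. -/
def MatchingFromInto {V : Type*} (G : SimpleGraph V) (A B : Finset V) : Prop :=
  ∃ f : V → V, Set.InjOn f ↑A ∧ ∀ a ∈ A, f a ∈ B ∧ G.Adj a (f a)

/-- The auxiliary bipartite graph `H_X` on vertex set `X ∪ N(X) ∪ {v, w}`, where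
`v = Sum.inr false` and `w = Sum.inr true`.  Its edges are the edges of `G` between
`X` and `N(X)`, the edge `vw`, and all edges from `v` to `N(X)`. -/
noncomputable def HX {V : Type*} (G : SimpleGraph V) [Fintype V] (X : Finset V) :
    SimpleGraph ({a : V // a ∈ X ∪ nbhd G X} ⊕ Bool) :=
  SimpleGraph.fromRel (fun p q =>
    match p, q with
    | Sum.inl a, Sum.inl b => a.1 ∈ X ∧ b.1 ∈ nbhd G X ∧ G.Adj a.1 b.1
    | Sum.inr false, Sum.inr true => True
    | Sum.inr false, Sum.inl b => b.1 ∈ nbhd G X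
    | _, _ => False)

/-- The copy of `X` inside the vertex set of `H_X`. -/
noncomputable def Xlift {V : Type*} (G : SimpleGraph V) [Fintype V] (X : Finset V) :
    Finset ({a : V // a ∈ X ∪ nbhd G X} ⊕ Bool) :=
  Finset.univ.filter (fun p => ∃ a : {a : V // a ∈ X ∪ nbhd G X}, p = Sum.inl a ∧ a.1 ∈ X)

/-- Edmonds–Gallai set `D`: vertices missed by some maximum matching. -/
noncomputable def gallaiD {V : Type*} (G : SimpleGraph V) [Fintype V] : Finset V :=
  Finset.univ.filter (fun v => ∃ M : Finset (Sym2 V),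
    IsMatchingF G M ∧ M.card = matchNum G ∧ ∀ e ∈ M, v ∉ e)

/-- Edmonds–Gallai set `A = N(D) - D`. -/
noncomputable def gallaiA {V : Type*} (G : SimpleGraph V) [Fintype V] : Finset V :=
  nbhd G (gallaiD G) \ gallaiD G

/-- Edmonds–Gallai set `C = V - A - D`. -/
noncomputable def gallaiC {V : Type*} (G : SimpleGraph V) [Fintype V] : Finset V :=
  (Finset.univ \ gallaiD G) \ gallaiA G

/-- The vertices of the singleton components of `G[D]`. -/
noncomputable def singlesD {V : Type*} (G : SimpleGraph V) [Fintype V] : Finset V :=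
  (gallaiD G).filter (fun v => ∀ w ∈ gallaiD G, ¬ G.Adj v w)

section AuxStmt17

variable {V : Type*} (G : SimpleGraph V) [Fintype V] [DecidableEq V] [DecidableRel G.Adj]

lemma mem_nbhd' {X : Finset V} {v : V} : v ∈ nbhd G X ↔ ∃ x ∈ X, G.Adj x v := by
  simp [nbhd]

lemma indep_disjoint_nbhd {S : Finset V} (hSi : IsIndep G S) :
    ∀ a ∈ S, a ∉ nbhd G S := by
  intro a ha hmem
  obtain ⟨x, hx, hadj⟩ := (mem_nbhd' G).mp hmem
  exact hSi x hx a ha hadj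

/-- Criticality gives Hall's condition, hence a matching from `N(S)` into `S`. -/
lemma matching_into_of_critical {S : Finset V} (hSc : IsCritical G S) :
    ∃ f : V → V, Set.InjOn f ↑(nbhd G S) ∧
      ∀ z ∈ nbhd G S, f z ∈ S ∧ G.Adj z (f z) := by
  classical
  -- Hall condition
  have hall : ∀ (T : Finset V), T ⊆ nbhd G S →
      T.card ≤ (S.filter (fun a => ∃ z ∈ T, G.Adj z a)).card := by
    intro T hT
    set B := S.filter (fun a => ∃ z ∈ T, G.Adj z a) with hB
    have hBS : B ⊆ S := Finset.filter_subset _ _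
    have hsub : nbhd G (S \ B) ⊆ nbhd G S \ T := by
      intro v hv
      obtain ⟨x, hx, hadj⟩ := (mem_nbhd' G).mp hv
      rw [Finset.mem_sdiff] at hx
      refine Finset.mem_sdiff.mpr ⟨(mem_nbhd' G).mpr ⟨x, hx.1, hadj⟩, ?_⟩
      intro hvT
      exact hx.2 (Finset.mem_filter.mpr ⟨hx.1, ⟨v, hvT, hadj.symm⟩⟩)
    have h1 : gdiff G (S \ B) ≤ gdiff G S := by
      rw [hSc]
      exact Finset.le_sup' (gdiff G) (Finset.mem_powerset.mpr (Finset.subset_univ _))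
    have h2 : (S \ B).card = S.card - B.card := Finset.card_sdiff_of_subset hBS
    have h3 : (nbhd G (S \ B)).card ≤ (nbhd G S).card - T.card := by
      calc (nbhd G (S \ B)).card ≤ (nbhd G S \ T).card := Finset.card_le_card hsub
        _ = (nbhd G S).card - T.card := Finset.card_sdiff_of_subset hT
    have hBcard : B.card ≤ S.card := Finset.card_le_card hBS
    have hTcard : T.card ≤ (nbhd G S).card := Finset.card_le_card hT
    unfold gdiff at h1
    rw [h2] at h1
    omega
  -- apply Hall's theorem
  set N := nbhd G S with hN
  have key : ∀ (A : Finset {z : V // z ∈ N}),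
      A.card ≤ (A.biUnion (fun z => S.filter (fun a => G.Adj z.1 a))).card := by
    intro A
    set T := A.image (Subtype.val) with hT
    have hTN : T ⊆ N := by
      intro v hv
      obtain ⟨z, _, rfl⟩ := Finset.mem_image.mp hv
      exact z.2
    have hcard : T.card = A.card := Finset.card_image_of_injective _ Subtype.val_injective
    have heq : A.biUnion (fun z => S.filter (fun a => G.Adj z.1 a))
        = S.filter (fun a => ∃ z ∈ T, G.Adj z a) := by
      ext a
      simp only [Finset.mem_biUnion, Finset.mem_filter, hT, Finset.mem_image]
      constructor
      · rintro ⟨z, hzA, haS, hadj⟩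
        exact ⟨haS, z.1, ⟨z, hzA, rfl⟩, hadj⟩
      · rintro ⟨haS, v, ⟨z, hzA, rfl⟩, hadj⟩
        exact ⟨z, hzA, haS, hadj⟩
    rw [heq, ← hcard]
    exact hall T hTN
  obtain ⟨f₀, hf₀inj, hf₀⟩ := (Finset.all_card_le_biUnion_card_iff_exists_injective
    (fun z : {z : V // z ∈ N} => S.filter (fun a => G.Adj z.1 a))).mp key
  refine ⟨fun z => if h : z ∈ N then f₀ ⟨z, h⟩ else z, ?_, ?_⟩
  · intro a ha b hb hab
    simp only [Finset.coe_mem, Finset.mem_coe] at ha hb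
    simp only [dif_pos ha, dif_pos hb] at hab
    exact congrArg Subtype.val (hf₀inj hab)
  · intro z hz
    simp only [dif_pos hz]
    have := hf₀ ⟨z, hz⟩
    rw [Finset.mem_filter] at this
    exact ⟨this.1, this.2⟩

/-- Augmenting-path lemma: if `y ∈ N(S)` is missed by a matching `M` and all
vertices of `N(S)` outside `W` are matched along `f`, we can augment. -/
lemma aug_lemma {S : Finset V} (hSi : IsIndep G S) (f : V → V)
    (hinj : Set.InjOn f ↑(nbhd G S))
    (hf : ∀ z ∈ nbhd G S, f z ∈ S ∧ G.Adj z (f z)) :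
    ∀ (W : Finset V), W ⊆ nbhd G S →
      ∀ (M : Finset (Sym2 V)), IsMatchingF G M →
        (∀ z ∈ nbhd G S, z ∉ W → s(z, f z) ∈ M) →
        ∀ y ∈ W, (∀ e ∈ M, y ∉ e) →
        ∃ M', IsMatchingF G M' ∧ M'.card = M.card + 1 := by
  intro W
  induction W using Finset.strongInduction with
  | _ W ih =>
  intro hWN M hM hinv y hyW hy
  have hyN : y ∈ nbhd G S := hWN hyW
  obtain ⟨hfyS, hfyAdj⟩ := hf y hyN
  have hyfy : y ≠ f y := G.ne_of_adj hfyAdj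
  by_cases hs : ∃ e ∈ M, f y ∈ e
  · -- f y matched in M
    obtain ⟨e, heM, hfe⟩ := hs
    obtain ⟨z, rfl⟩ := Sym2.mem_iff_exists.mp hfe
    have hadj : G.Adj (f y) z := (SimpleGraph.mem_edgeSet G).mp (hM.1 heM)
    have hzN : z ∈ nbhd G S := (mem_nbhd' G).mpr ⟨f y, hfyS, hadj⟩
    have hzy : z ≠ y := by
      rintro rfl
      exact hy _ heM (Sym2.mem_mk_right _ _)
    have hzfy : z ≠ f y := fun h => (G.ne_of_adj hadj) h.symm
    have hzW : z ∈ W := by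
      by_contra hzW
      have hze : s(z, f z) ∈ M := hinv z hzN hzW
      by_cases hee : s(f y, z) = s(z, f z)
      · rw [Sym2.eq_iff] at hee
        rcases hee with ⟨h1, h2⟩ | ⟨h1, h2⟩
        · exact hzfy h1.symm
        · exact hzy (hinj hzN hyN h1.symm)
      · exact hM.2 _ heM _ hze hee z (Sym2.mem_mk_right _ _) (Sym2.mem_mk_left _ _)
    -- flip: M₁ = M - e + s(y, f y)
    set M₁ := insert s(y, f y) (M.erase s(f y, z)) with hM₁
    have hnew_notmem : s(y, f y) ∉ M.erase s(f y, z) := by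
      intro h
      exact hy _ (Finset.mem_of_mem_erase h) (Sym2.mem_mk_left _ _)
    have hM₁match : IsMatchingF G M₁ := by
      constructor
      · intro e' he'
        rcases Finset.mem_insert.mp he' with rfl | h
        · exact (SimpleGraph.mem_edgeSet G).mpr hfyAdj
        · exact hM.1 (Finset.mem_of_mem_erase h)
      · intro e₁ he₁ e₂ he₂ hne v hv1
        rcases Finset.mem_insert.mp he₁ with rfl | h1 <;>
          rcases Finset.mem_insert.mp he₂ with rfl | h2
        · exact absurd rfl hne
        · rcases Sym2.mem_iff.mp hv1 with rfl | rfl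
          · exact fun hv2 => hy _ (Finset.mem_of_mem_erase h2) hv2
          · intro hv2
            exact hM.2 _ heM _ (Finset.mem_of_mem_erase h2)
              (fun h => (Finset.mem_erase.mp h2).1 h.symm) (f y)
              (Sym2.mem_mk_left _ _) hv2
        · intro hv2
          rcases Sym2.mem_iff.mp hv2 with rfl | rfl
          · exact hy _ (Finset.mem_of_mem_erase h1) hv1
          · exact hM.2 _ heM _ (Finset.mem_of_mem_erase h1)
              (fun h => (Finset.mem_erase.mp h1).1 h.symm) (f y)
              (Sym2.mem_mk_left _ _) hv1
        · exact hM.2 _ (Finset.mem_of_mem_erase h1) _ (Finset.mem_of_mem_erase h2) hne v hv1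
    have hM₁card : M₁.card = M.card := by
      rw [hM₁, Finset.card_insert_of_notMem hnew_notmem,
        Finset.card_erase_of_mem heM]
      have : 0 < M.card := Finset.card_pos.mpr ⟨_, heM⟩
      omega
    have hzun : ∀ e' ∈ M₁, z ∉ e' := by
      intro e' he' hze'
      rcases Finset.mem_insert.mp he' with rfl | h
      · rcases Sym2.mem_iff.mp hze' with rfl | rfl
        · exact hzy rfl
        · exact hzfy rfl
      · have hne : e' ≠ s(f y, z) := (Finset.mem_erase.mp h).1
        exact hM.2 _ heM _ (Finset.mem_of_mem_erase h) hne.symm z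
          (Sym2.mem_mk_right _ _) hze'
    have hinv₁ : ∀ u ∈ nbhd G S, u ∉ W.erase y → s(u, f u) ∈ M₁ := by
      intro u huN hu
      by_cases huy : u = y
      · subst huy
        exact Finset.mem_insert_self _ _
      · have huW : u ∉ W := fun h => hu (Finset.mem_erase.mpr ⟨huy, h⟩)
        have hue : s(u, f u) ∈ M := hinv u huN huW
        refine Finset.mem_insert_of_mem (Finset.mem_erase.mpr ⟨?_, hue⟩)
        intro heq
        rw [Sym2.eq_iff] at heq
        rcases heq with ⟨h1, h2⟩ | ⟨h1, h2⟩
        · exact indep_disjoint_nbhd G hSi (f y) hfyS (h1 ▸ huN)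
        · exact huW (h1 ▸ hzW)
    have hss : W.erase y ⊂ W := Finset.erase_ssubset hyW
    have hzWe : z ∈ W.erase y := Finset.mem_erase.mpr ⟨hzy, hzW⟩
    obtain ⟨M', hM', hM'card⟩ := ih (W.erase y) hss
      ((W.erase_subset y).trans hWN) M₁ hM₁match hinv₁ z hzWe hzun
    exact ⟨M', hM', by rw [hM'card, hM₁card]⟩
  · -- f y unmatched: augment directly
    push_neg at hs
    refine ⟨insert s(y, f y) M, ⟨?_, ?_⟩, ?_⟩
    · intro e' he'
      rcases Finset.mem_insert.mp he' with rfl | h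
      · exact (SimpleGraph.mem_edgeSet G).mpr hfyAdj
      · exact hM.1 h
    · intro e₁ he₁ e₂ he₂ hne v hv1
      rcases Finset.mem_insert.mp he₁ with rfl | h1 <;>
        rcases Finset.mem_insert.mp he₂ with rfl | h2
      · exact absurd rfl hne
      · rcases Sym2.mem_iff.mp hv1 with rfl | rfl
        · exact fun hv2 => hy _ h2 hv2
        · exact fun hv2 => hs _ h2 hv2
      · intro hv2
        rcases Sym2.mem_iff.mp hv2 with rfl | rfl
        · exact hy _ h1 hv1
        · exact hs _ h1 hv1
      · exact hM.2 _ h1 _ h2 hne v hv1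
    · rw [Finset.card_insert_of_notMem (fun h => hy _ h (Sym2.mem_mk_left _ _))]

lemma card_le_matchNum {M : Finset (Sym2 V)} (h : IsMatchingF G M) :
    M.card ≤ matchNum G := by
  classical
  exact Finset.le_sup (Finset.mem_filter.mpr ⟨Finset.mem_univ _, h⟩)

/-- Key lemma: no neighbor of a critical independent set lies in `D`. -/
lemma nbhd_critical_not_gallaiD {S : Finset V} (hSc : IsCritical G S)
    (hSi : IsIndep G S) : ∀ w ∈ nbhd G S, w ∉ gallaiD G := by
  intro w hwN hwD
  obtain ⟨f, hinj, hf⟩ := matching_into_of_critical G hSc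
  simp only [gallaiD, Finset.mem_filter, Finset.mem_univ, true_and] at hwD
  obtain ⟨M, hM, hMcard, hMmiss⟩ := hwD
  obtain ⟨M', hM', hM'card⟩ := aug_lemma G hSi f hinj hf (nbhd G S)
    (le_refl _) M hM (fun z hz1 hz2 => absurd hz1 hz2) w hwN hMmiss
  have := card_le_matchNum G hM'
  omega

end AuxStmt17

/-- a critical independent set lies in `C` together with the
singleton components of `G[D]` (Edmonds–Gallai decomposition). -/

theorem stmt17 {V : Type*} (G : SimpleGraph V) [Fintype V] [DecidableEq V] [DecidableRel G.Adj]
    (S : Finset V) (hSc : IsCritical G S) (hSi : IsIndep G S) :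
    S ⊆ gallaiC G ∪ singlesD G := by
  intro x hxS
  have key := nbhd_critical_not_gallaiD G hSc hSi
  by_cases hxD : x ∈ gallaiD G
  · apply Finset.mem_union_right
    simp only [singlesD, Finset.mem_filter]
    refine ⟨hxD, ?_⟩
    intro w hwD hadj
    exact key w ((mem_nbhd' G).mpr ⟨x, hxS, hadj⟩) hwD
  · refine Finset.mem_union_left _ ?_
    simp only [gallaiC, gallaiA, Finset.mem_sdiff, Finset.mem_univ, true_and]
    refine ⟨hxD, ?_⟩
    rintro ⟨hxn, -⟩
    obtain ⟨d, hdD, hadj⟩ := (mem_nbhd' G).mp hxn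
    exact key d ((mem_nbhd' G).mpr ⟨x, hxS, hadj.symm⟩) hdD
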